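/- arXiv:1104.1960 — 3 statements merged into one kernel-verified Lean document; each statement's English description precedes it below -/
import Mathlib

section
/- Let 1 ≤ p < ∞ and 1/p + 1/p' = 1. There is a constant 0 < C < ∞, depending only on p, n and the uniform duality constant, such that for all sequences f = (f_Q)_{Q∈𝒟} with f_Q ∈ X_Q and g = (g_Q)_{Q∈𝒟} with g_Q ∈ Y_Q, one has ∑_{Q∈𝒟} |⟨f_Q, g_Q⟩| ≤ C ‖N_X f‖_{L_p(ℝ^n)} ‖C_Y g‖_{L_{p'}(ℝ^n)}. -/
open MeasureTheory ENNReal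

noncomputable section

/-- Index set for dyadic cubes in `ℝⁿ`: scale `j : ℤ` and position `k : ℤⁿ`. -/
abbrev DIdx (n : ℕ) := ℤ × (Fin n → ℤ)

/-- The open dyadic cube `2⁻ʲ(0,1)ⁿ + 2⁻ʲ k`. -/
def dcube (n : ℕ) (Q : DIdx n) : Set (EuclideanSpace ℝ (Fin n)) :=
  {x | ∀ i, (2:ℝ) ^ (-Q.1) * (Q.2 i : ℝ) < x i ∧ x i < (2:ℝ) ^ (-Q.1) * ((Q.2 i : ℝ) + 1)}

/-- The `L_p` norm (valued in `ℝ≥0∞`) of an `ℝ≥0∞`-valued function. -/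
def eLp {α : Type*} [MeasurableSpace α] (p : ℝ≥0∞) (F : α → ℝ≥0∞) (μ : Measure α) : ℝ≥0∞ :=
  if p = ∞ then essSup F μ else (∫⁻ x, F x ^ p.toReal ∂μ) ^ p.toReal⁻¹

/-- The non-tangential maximal function `N_X f(x) = sup_{Q ∋ x} ‖f_Q‖`. -/
def NX {n : ℕ} {X : DIdx n → Type*} [∀ Q, NormedAddCommGroup (X Q)]
    (f : ∀ Q, X Q) (x : EuclideanSpace ℝ (Fin n)) : ℝ≥0∞ :=
  ⨆ Q, ⨆ (_ : x ∈ dcube n Q), (‖f Q‖₊ : ℝ≥0∞)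

/-- The Carleson functional `C_Y g(x) = sup_{Q ∋ x} |Q|⁻¹ ∑_{R ⊆ Q} ‖g_R‖`. -/
def CY {n : ℕ} {Y : DIdx n → Type*} [∀ Q, NormedAddCommGroup (Y Q)]
    (g : ∀ Q, Y Q) (x : EuclideanSpace ℝ (Fin n)) : ℝ≥0∞ :=
  ⨆ Q, ⨆ (_ : x ∈ dcube n Q),
    (volume (dcube n Q))⁻¹ * ∑' R : {R : DIdx n // dcube n R ⊆ dcube n Q}, (‖g R.1‖₊ : ℝ≥0∞)

/-- A duality between Banach spaces, with constant `C`. -/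
def IsDuality {X Y : Type*} [NormedAddCommGroup X] [NormedSpace ℝ X]
    [NormedAddCommGroup Y] [NormedSpace ℝ Y]
    (pair : X →ₗ[ℝ] Y →ₗ[ℝ] ℝ) (C : ℝ) : Prop :=
  (∀ f g, |pair f g| ≤ C * ‖f‖ * ‖g‖) ∧
  (∀ f, ‖f‖ ≤ C * sSup ((fun g => pair f g) '' {g | ‖g‖ = 1})) ∧
  (∀ g, ‖g‖ ≤ C * sSup ((fun f => pair f g) '' {f | ‖f‖ = 1}))

/-!
Write `‖f_Q‖ ‖g_Q‖ = ∫_0^∞ ‖g_Q‖ 1[t < ‖f_Q‖] dt`. For fixed `t`, every cube with `‖f_Q‖ > t`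
lies in `{N_X f > t}`. Dyadic cubes are nested or disjoint, so a finite family of them is covered
by its maximal members, which are pairwise disjoint, and on each maximal cube `M` the definition
of `C_Y g` gives `∑_{R ⊆ M} ‖g_R‖ ≤ ∫_M C_Y g`. Hence the cubes with `‖f_Q‖ > t` contribute at most
`∫_{N_X f > t} C_Y g`, and integrating in `t` yields `∑_Q ‖f_Q‖ ‖g_Q‖ ≤ ∫ N_X f ⋅ C_Y g`. Hölder's
inequality and `|⟨f_Q, g_Q⟩| ≤ C₀ ‖f_Q‖ ‖g_Q‖` finish the proof with `C = C₀`.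
-/

open Set

lemma volume_setOf_pos_ofReal_lt (a : ℝ≥0∞) :
    volume {t : ℝ | 0 < t ∧ ENNReal.ofReal t < a} = a := by
  rcases eq_or_ne a ∞ with rfl | ha
  · have h : {t : ℝ | 0 < t ∧ ENNReal.ofReal t < ∞} = Ioi 0 := by
      ext t
      simp
    rw [h, Real.volume_Ioi]
  · have h : {t : ℝ | 0 < t ∧ ENNReal.ofReal t < a} = Ioo 0 a.toReal := by
      ext t
      exact and_congr_right fun ht => ENNReal.ofReal_lt_iff_lt_toReal ht.le ha
    rw [h, Real.volume_Ioo, sub_zero, ENNReal.ofReal_toReal ha]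

lemma setLIntegral_Ioi_indicator_ofReal_lt (a c : ℝ≥0∞) :
    ∫⁻ t in Ioi (0 : ℝ), {t : ℝ | ENNReal.ofReal t < a}.indicator (fun _ => c) t = c * a := by
  have hs : MeasurableSet {t : ℝ | ENNReal.ofReal t < a} :=
    measurableSet_lt ENNReal.measurable_ofReal measurable_const
  rw [lintegral_indicator hs, Measure.restrict_restrict hs, setLIntegral_const, inter_comm]
  exact congrArg (c * ·) (volume_setOf_pos_ofReal_lt a)

lemma lintegral_mul_eq_lintegral_setLIntegral_lt {α : Type*} [MeasurableSpace α] {μ : Measure α}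
    [SFinite μ] {N F : α → ℝ≥0∞}
    (hN : Measurable N) (hF : Measurable F) :
    ∫⁻ x, N x * F x ∂μ =
      ∫⁻ t in Ioi (0 : ℝ), ∫⁻ x in {x | ENNReal.ofReal t < N x}, F x ∂μ := by
  have hmeas : Measurable (Function.uncurry fun x (t : ℝ) =>
      {t : ℝ | ENNReal.ofReal t < N x}.indicator (fun _ => F x) t) := by
    refine Measurable.ite ?_ (hF.comp measurable_fst) measurable_const
    exact measurableSet_lt (ENNReal.measurable_ofReal.comp measurable_snd) (hN.comp measurable_fst)
  calc ∫⁻ x, N x * F x ∂μ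
      = ∫⁻ x, (∫⁻ t in Ioi (0 : ℝ), {t : ℝ | ENNReal.ofReal t < N x}.indicator (fun _ => F x) t)
          ∂μ := by
        simp_rw [setLIntegral_Ioi_indicator_ofReal_lt, mul_comm]
    _ = ∫⁻ t in Ioi (0 : ℝ),
          ∫⁻ x, {t : ℝ | ENNReal.ofReal t < N x}.indicator (fun _ => F x) t ∂μ :=
        lintegral_lintegral_swap hmeas.aemeasurable
    _ = ∫⁻ t in Ioi (0 : ℝ), ∫⁻ x in {x | ENNReal.ofReal t < N x}, F x ∂μ := by
        refine lintegral_congr fun t => ?_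
        rw [← lintegral_indicator (measurableSet_lt measurable_const hN)]
        rfl

section NestedFamily

variable {α ι : Type*} {c : ι → Set α}

lemma pairwiseDisjoint_maximal_of_nested
    (hnest : ∀ Q R, (c Q ∩ c R).Nonempty → c Q ⊆ c R ∨ c R ⊆ c Q)
    {𝒮 : Set (Set α)} (h𝒮 : 𝒮 ⊆ range c) :
    {m | Maximal (· ∈ 𝒮) m}.PairwiseDisjoint id := by
  intro m₁ hm₁ m₂ hm₂ hne
  obtain ⟨Q₁, rfl⟩ := h𝒮 hm₁.prop
  obtain ⟨Q₂, rfl⟩ := h𝒮 hm₂.prop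
  by_contra hmeet
  rcases hnest Q₁ Q₂ (not_disjoint_iff_nonempty_inter.mp hmeet) with h | h
  · exact hne (hm₁.eq_of_le hm₂.prop h)
  · exact hne (hm₂.eq_of_le hm₁.prop h).symm

variable [MeasurableSpace α] {μ : Measure α}
  (hnest : ∀ Q R, (c Q ∩ c R).Nonempty → c Q ⊆ c R ∨ c R ⊆ c Q)
  (hc : ∀ Q, MeasurableSet (c Q)) {b : ι → ℝ≥0∞} {F : α → ℝ≥0∞}
  (hpack : ∀ Q, ∑' R : {R // c R ⊆ c Q}, b R ≤ ∫⁻ x in c Q, F x ∂μ)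
include hnest hc hpack

lemma sum_le_setLIntegral_of_nested {Ω : Set α} (S : Finset ι) (hS : ∀ Q ∈ S, c Q ⊆ Ω) :
    ∑ Q ∈ S, b Q ≤ ∫⁻ x in Ω, F x ∂μ := by
  classical
  set M := (S.image c).filter (Maximal (· ∈ S.image c))
  have hcover : ∀ Q ∈ S, ∃ m ∈ M, c Q ⊆ m := fun Q hQ => by
    obtain ⟨m, hQm, hm⟩ := (S.image c).exists_le_maximal (Finset.mem_image_of_mem c hQ)
    exact ⟨m, Finset.mem_filter.mpr ⟨hm.prop, hm⟩, hQm⟩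
  have hcube : ∀ m ∈ M, ∃ Q ∈ S, c Q = m := fun m hm =>
    Finset.mem_image.mp (Finset.mem_filter.mp hm).1
  have hdisj : (M : Set (Set α)).PairwiseDisjoint id := by
    refine (pairwiseDisjoint_maximal_of_nested hnest (𝒮 := S.image c) ?_).subset ?_
    · intro m hm
      obtain ⟨Q, -, rfl⟩ := Finset.mem_image.mp hm
      exact mem_range_self Q
    · intro m hm
      exact (Finset.mem_filter.mp hm).2
  calc ∑ Q ∈ S, b Q
      ≤ ∑ Q ∈ S, ∑ m ∈ M, if c Q ⊆ m then b Q else 0 := Finset.sum_le_sum fun Q hQ => by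
        obtain ⟨m, hm, hQm⟩ := hcover Q hQ
        exact (if_pos hQm).symm.le.trans
          (Finset.single_le_sum (f := fun m => if c Q ⊆ m then b Q else 0) (fun _ _ => zero_le) hm)
    _ = ∑ m ∈ M, ∑ Q ∈ S with c Q ⊆ m, b Q := by
        rw [Finset.sum_comm]
        simp only [Finset.sum_filter]
    _ ≤ ∑ m ∈ M, ∫⁻ x in m, F x ∂μ := Finset.sum_le_sum fun m hm => by
        obtain ⟨Q₀, -, rfl⟩ := hcube m hm
        calc ∑ Q ∈ S with c Q ⊆ c Q₀, b Q
            = ∑ R ∈ (S.filter (c · ⊆ c Q₀)).subtype (c · ⊆ c Q₀), b R :=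
              (Finset.sum_subtype_of_mem b fun Q hQ => (Finset.mem_filter.mp hQ).2).symm
          _ ≤ ∑' R : {R // c R ⊆ c Q₀}, b R := ENNReal.sum_le_tsum _
          _ ≤ ∫⁻ x in c Q₀, F x ∂μ := hpack Q₀
    _ = ∫⁻ x in ⋃ m ∈ M, m, F x ∂μ := (lintegral_biUnion_finset hdisj
        (fun m hm => by obtain ⟨Q, -, rfl⟩ := hcube m hm; exact hc Q) F).symm
    _ ≤ ∫⁻ x in Ω, F x ∂μ := lintegral_mono_set <| iUnion₂_subset fun m hm => by
        obtain ⟨Q, hQ, rfl⟩ := hcube m hm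
        exact hS Q hQ

lemma tsum_le_setLIntegral_of_nested (Ω : Set α) :
    ∑' Q : {Q // c Q ⊆ Ω}, b Q ≤ ∫⁻ x in Ω, F x ∂μ := by
  refine tsum_le_of_sum_le' zero_le fun S => ?_
  calc ∑ Q ∈ S, b Q = ∑ Q ∈ S.map (Function.Embedding.subtype _), b Q :=
        (Finset.sum_map S (Function.Embedding.subtype _) b).symm
    _ ≤ ∫⁻ x in Ω, F x ∂μ := sum_le_setLIntegral_of_nested hnest hc hpack _ fun Q hQ => by
        obtain ⟨Q, -, rfl⟩ := Finset.mem_map.mp hQ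
        exact Q.2

lemma tsum_mul_le_lintegral_mul_of_nested [Countable ι] [SFinite μ] {a : ι → ℝ≥0∞}
    {N : α → ℝ≥0∞} (hN : Measurable N) (hF : Measurable F) (haN : ∀ Q, ∀ x ∈ c Q, a Q ≤ N x) :
    ∑' Q, a Q * b Q ≤ ∫⁻ x, N x * F x ∂μ := by
  have hlevel : ∀ t : ℝ, ∑' Q, {t : ℝ | ENNReal.ofReal t < a Q}.indicator (fun _ => b Q) t ≤
      ∫⁻ x in {x | ENNReal.ofReal t < N x}, F x ∂μ := fun t => by
    refine le_trans ?_ (tsum_le_setLIntegral_of_nested hnest hc hpack _)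
    refine le_trans (ENNReal.tsum_le_tsum fun Q => ?_)
      (tsum_subtype {Q | c Q ⊆ {x | ENNReal.ofReal t < N x}} b).ge
    by_cases ht : ENNReal.ofReal t < a Q
    · have hQ : c Q ⊆ {x | ENNReal.ofReal t < N x} := fun x hx => ht.trans_le (haN Q x hx)
      rw [indicator_of_mem (s := {t : ℝ | ENNReal.ofReal t < a Q}) ht,
        indicator_of_mem (s := {Q | c Q ⊆ _}) hQ]
    · rw [indicator_of_notMem (s := {t : ℝ | ENNReal.ofReal t < a Q}) ht]
      exact zero_le
  calc ∑' Q, a Q * b Q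
      = ∑' Q, ∫⁻ t in Ioi (0 : ℝ),
          {t : ℝ | ENNReal.ofReal t < a Q}.indicator (fun _ => b Q) t := by
        simp_rw [setLIntegral_Ioi_indicator_ofReal_lt, mul_comm]
    _ = ∫⁻ t in Ioi (0 : ℝ), ∑' Q, {t : ℝ | ENNReal.ofReal t < a Q}.indicator (fun _ => b Q) t :=
        (lintegral_tsum fun Q => (measurable_const.indicator
          (measurableSet_lt ENNReal.measurable_ofReal measurable_const)).aemeasurable).symm
    _ ≤ ∫⁻ t in Ioi (0 : ℝ), ∫⁻ x in {x | ENNReal.ofReal t < N x}, F x ∂μ := lintegral_mono hlevel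
    _ = ∫⁻ x, N x * F x ∂μ := (lintegral_mul_eq_lintegral_setLIntegral_lt hN hF).symm

end NestedFamily

section Holder

variable {α : Type*} [MeasurableSpace α] {μ : Measure α} {F G : α → ℝ≥0∞}

lemma lintegral_mul_le_eLp_one_mul_eLp_top (hF : AEMeasurable F μ) :
    ∫⁻ x, F x * G x ∂μ ≤ eLp 1 F μ * eLp ∞ G μ := by
  simp only [eLp, one_ne_top, if_false, if_true, toReal_one, inv_one, rpow_one]
  calc ∫⁻ x, F x * G x ∂μ ≤ ∫⁻ x, F x * essSup G μ ∂μ := by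
        refine lintegral_mono_ae ?_
        filter_upwards [ENNReal.ae_le_essSup G] with x hx
        gcongr
    _ = (∫⁻ x, F x ∂μ) * essSup G μ := lintegral_mul_const'' _ hF

lemma lintegral_mul_le_eLp_mul_eLp {p q : ℝ≥0∞} [p.HolderConjugate q]
    (hF : AEMeasurable F μ) (hG : AEMeasurable G μ) :
    ∫⁻ x, F x * G x ∂μ ≤ eLp p F μ * eLp q G μ := by
  rcases eq_or_ne p ∞ with rfl | hp
  · obtain rfl : q = 1 := (HolderConjugate.eq_top_iff_eq_one ∞ q).mp rfl
    simpa only [mul_comm] using lintegral_mul_le_eLp_one_mul_eLp_top (μ := μ) (G := F) hG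
  rcases eq_or_ne q ∞ with rfl | hq
  · obtain rfl : p = 1 := (HolderConjugate.eq_top_iff_eq_one ∞ p).mp rfl
    exact lintegral_mul_le_eLp_one_mul_eLp_top hF
  rw [eLp, eLp, if_neg hp, if_neg hq]
  simpa only [one_div, Pi.mul_apply] using ENNReal.lintegral_mul_le_Lp_mul_Lq μ
    (HolderConjugate.toReal_of_ne_top hp hq) hF hG

end Holder

lemma measurable_iSup_iSup_mem {α ι : Type*} [MeasurableSpace α] [Countable ι] {s : ι → Set α}
    (hs : ∀ i, MeasurableSet (s i)) (v : ι → ℝ≥0∞) :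
    Measurable fun x => ⨆ i, ⨆ (_ : x ∈ s i), v i := by
  refine Measurable.iSup fun i => ?_
  have h : (fun x => ⨆ (_ : x ∈ s i), v i) = (s i).indicator fun _ => v i := by
    funext x
    by_cases hx : x ∈ s i <;> simp [hx]
  exact h ▸ measurable_const.indicator (hs i)

lemma le_setLIntegral_of_average_le {α : Type*} [MeasurableSpace α] {μ : Measure α} {s : Set α}
    (hs : MeasurableSet s) (hμ₀ : μ s ≠ 0) (hμ : μ s ≠ ∞) {S : ℝ≥0∞} {F : α → ℝ≥0∞}
    (h : ∀ x ∈ s, (μ s)⁻¹ * S ≤ F x) : S ≤ ∫⁻ x in s, F x ∂μ :=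
  calc S = (μ s)⁻¹ * S * μ s := by rw [mul_right_comm, ENNReal.inv_mul_cancel hμ₀ hμ, one_mul]
    _ = ∫⁻ _ in s, (μ s)⁻¹ * S ∂μ := (setLIntegral_const s _).symm
    _ ≤ ∫⁻ x in s, F x ∂μ := setLIntegral_mono' hs h

lemma IsDuality.nnnorm_le {X Y : Type*} [NormedAddCommGroup X] [NormedSpace ℝ X]
    [NormedAddCommGroup Y] [NormedSpace ℝ Y] {pair : X →ₗ[ℝ] Y →ₗ[ℝ] ℝ} {C : ℝ}
    (h : IsDuality pair C) (x : X) (y : Y) :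
    (‖pair x y‖₊ : ℝ≥0∞) ≤ ENNReal.ofReal C * (‖x‖₊ * ‖y‖₊) := by
  simp only [← enorm_eq_nnnorm, ← ofReal_norm, Real.norm_eq_abs]
  rw [← mul_assoc, ← ENNReal.ofReal_mul' (norm_nonneg x), ← ENNReal.ofReal_mul' (norm_nonneg y)]
  exact ENNReal.ofReal_le_ofReal (h.1 x y)

lemma Ioo_int_mul_subset {c : ℝ} (hc : 0 < c) {a b m : ℤ} {t : ℝ}
    (ht : t ∈ Ioo (c * a) (c * b)) (htm : t ∈ Ioo (c * m) (c * (m + 1))) :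
    Ioo (c * m) (c * (m + 1)) ⊆ Ioo (c * a) (c * b) := by
  have ham : a < m + 1 := by exact_mod_cast lt_of_mul_lt_mul_left (ht.1.trans htm.2) hc.le
  have hmb : m < b := by exact_mod_cast lt_of_mul_lt_mul_left (htm.1.trans ht.2) hc.le
  refine Ioo_subset_Ioo ?_ ?_ <;> gcongr
  · exact_mod_cast Int.lt_add_one_iff.mp ham
  · exact_mod_cast hmb

lemma dyadic_Ioo_subset_of_le {j i : ℤ} (hji : j ≤ i) {k m : ℤ} {t : ℝ}
    (ht : t ∈ Ioo ((2 : ℝ) ^ (-j) * k) ((2 : ℝ) ^ (-j) * (k + 1)))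
    (htm : t ∈ Ioo ((2 : ℝ) ^ (-i) * m) ((2 : ℝ) ^ (-i) * (m + 1))) :
    Ioo ((2 : ℝ) ^ (-i) * m) ((2 : ℝ) ^ (-i) * (m + 1)) ⊆
      Ioo ((2 : ℝ) ^ (-j) * k) ((2 : ℝ) ^ (-j) * (k + 1)) := by
  obtain ⟨d, rfl⟩ : ∃ d : ℕ, i = j + d := ⟨(i - j).toNat, by omega⟩
  have hscale : ∀ l : ℤ, (2 : ℝ) ^ (-j) * l = (2 : ℝ) ^ (-(j + d)) * ((2 ^ d * l : ℤ) : ℝ) := by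
    intro l
    rw [Int.cast_mul, Int.cast_pow, Int.cast_ofNat, ← mul_assoc, ← zpow_natCast,
      ← zpow_add₀ two_ne_zero]
    ring_nf
  have hk : (2 : ℝ) ^ (-j) * (k + 1) = (2 : ℝ) ^ (-(j + d)) * ((2 ^ d * (k + 1) : ℤ) : ℝ) := by
    rw [← hscale]
    push_cast
    ring
  rw [hscale, hk] at ht ⊢
  exact Ioo_int_mul_subset (by positivity) ht htm

section DyadicCube

variable {n : ℕ}

lemma dcube_eq_preimage_pi (Q : DIdx n) : dcube n Q = (MeasurableEquiv.toLp 2 (Fin n → ℝ)).symm ⁻¹'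
    univ.pi fun i => Ioo ((2 : ℝ) ^ (-Q.1) * Q.2 i) ((2 : ℝ) ^ (-Q.1) * (Q.2 i + 1)) := by
  ext x
  simp only [dcube, mem_preimage, mem_pi, mem_univ, forall_const, mem_Ioo]
  rfl

lemma measurableSet_dcube (Q : DIdx n) : MeasurableSet (dcube n Q) := by
  rw [dcube_eq_preimage_pi]
  exact (MeasurableEquiv.toLp 2 (Fin n → ℝ)).symm.measurable
    (MeasurableSet.univ_pi fun _ => measurableSet_Ioo)

lemma volume_dcube (Q : DIdx n) : volume (dcube n Q) = ENNReal.ofReal ((2 : ℝ) ^ (-Q.1)) ^ n := by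
  rw [dcube_eq_preimage_pi, (EuclideanSpace.volume_preserving_symm_measurableEquiv_toLp
    (Fin n)).measure_preimage (MeasurableSet.univ_pi fun _ => measurableSet_Ioo).nullMeasurableSet,
    volume_pi_pi]
  simp_rw [Real.volume_Ioo, ← mul_sub, add_sub_cancel_left, mul_one]
  rw [Finset.prod_const, Finset.card_univ, Fintype.card_fin]

lemma volume_dcube_ne_zero (Q : DIdx n) : volume (dcube n Q) ≠ 0 := by
  rw [volume_dcube]
  positivity

lemma volume_dcube_ne_top (Q : DIdx n) : volume (dcube n Q) ≠ ∞ := by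
  rw [volume_dcube]
  exact pow_ne_top ofReal_ne_top

lemma dcube_subset_of_le {Q R : DIdx n} (hQR : Q.1 ≤ R.1) {x : EuclideanSpace ℝ (Fin n)}
    (hxQ : x ∈ dcube n Q) (hxR : x ∈ dcube n R) : dcube n R ⊆ dcube n Q :=
  fun _ hy i => dyadic_Ioo_subset_of_le hQR (hxQ i) (hxR i) (hy i)

lemma dcube_subset_or_subset {Q R : DIdx n} (h : (dcube n Q ∩ dcube n R).Nonempty) :
    dcube n Q ⊆ dcube n R ∨ dcube n R ⊆ dcube n Q := by
  obtain ⟨x, hxQ, hxR⟩ := h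
  rcases le_total Q.1 R.1 with hQR | hRQ
  · exact Or.inr (dcube_subset_of_le hQR hxQ hxR)
  · exact Or.inl (dcube_subset_of_le hRQ hxR hxQ)

variable {X : DIdx n → Type*} [∀ Q, NormedAddCommGroup (X Q)]

lemma le_NX (f : ∀ Q, X Q) {Q : DIdx n} {x : EuclideanSpace ℝ (Fin n)} (hx : x ∈ dcube n Q) :
    (‖f Q‖₊ : ℝ≥0∞) ≤ NX f x :=
  le_iSup₂_of_le Q hx le_rfl

lemma measurable_NX (f : ∀ Q, X Q) : Measurable (NX f) :=
  measurable_iSup_iSup_mem measurableSet_dcube _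

lemma average_le_CY (g : ∀ Q, X Q) {Q : DIdx n} {x : EuclideanSpace ℝ (Fin n)}
    (hx : x ∈ dcube n Q) :
    (volume (dcube n Q))⁻¹ * ∑' R : {R : DIdx n // dcube n R ⊆ dcube n Q}, (‖g R.1‖₊ : ℝ≥0∞) ≤
      CY g x :=
  le_iSup₂_of_le Q hx le_rfl

lemma measurable_CY (g : ∀ Q, X Q) : Measurable (CY g) :=
  measurable_iSup_iSup_mem measurableSet_dcube _

lemma tsum_nnnorm_mul_le_lintegral_NX_mul_CY {Y : DIdx n → Type*}
    [∀ Q, NormedAddCommGroup (Y Q)] (f : ∀ Q, X Q) (g : ∀ Q, Y Q) :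
    ∑' Q, (‖f Q‖₊ : ℝ≥0∞) * ‖g Q‖₊ ≤ ∫⁻ x, NX f x * CY g x :=
  tsum_mul_le_lintegral_mul_of_nested (fun _ _ => dcube_subset_or_subset) measurableSet_dcube
    (fun Q => le_setLIntegral_of_average_le (measurableSet_dcube Q) (volume_dcube_ne_zero Q)
      (volume_dcube_ne_top Q) fun _ => average_le_CY g)
    (measurable_NX f) (measurable_CY g) fun _ _ => le_NX f

end DyadicCube

theorem stmt0_general (n : ℕ) (p p' : ℝ≥0∞)
    (hconj : 1/p + 1/p' = 1) (C₀ : ℝ) (hC₀ : 0 < C₀) :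
    ∃ C : ℝ, 0 < C ∧
      ∀ (X Y : DIdx n → Type)
        [∀ Q, NormedAddCommGroup (X Q)] [∀ Q, NormedSpace ℝ (X Q)]
        [∀ Q, CompleteSpace (X Q)]
        [∀ Q, NormedAddCommGroup (Y Q)] [∀ Q, NormedSpace ℝ (Y Q)]
        [∀ Q, CompleteSpace (Y Q)]
        (pair : ∀ Q, X Q →ₗ[ℝ] Y Q →ₗ[ℝ] ℝ),
        (∀ Q, IsDuality (pair Q) C₀) →
        ∀ (f : ∀ Q, X Q) (g : ∀ Q, Y Q),
          ∑' Q, (‖pair Q (f Q) (g Q)‖₊ : ℝ≥0∞) ≤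
            ENNReal.ofReal C * eLp p (NX f) volume * eLp p' (CY g) volume := by
  have : p.HolderConjugate p' := holderConjugate_iff.mpr (by simpa only [one_div] using hconj)
  refine ⟨C₀, hC₀, fun X Y _ _ _ _ _ _ pair hdual f g => ?_⟩
  calc ∑' Q, (‖pair Q (f Q) (g Q)‖₊ : ℝ≥0∞)
      ≤ ∑' Q, ENNReal.ofReal C₀ * ((‖f Q‖₊ : ℝ≥0∞) * ‖g Q‖₊) :=
        ENNReal.tsum_le_tsum fun Q => (hdual Q).nnnorm_le (f Q) (g Q)
    _ = ENNReal.ofReal C₀ * ∑' Q, (‖f Q‖₊ : ℝ≥0∞) * ‖g Q‖₊ := ENNReal.tsum_mul_left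
    _ ≤ ENNReal.ofReal C₀ * ∫⁻ x, NX f x * CY g x := by
        gcongr
        exact tsum_nnnorm_mul_le_lintegral_NX_mul_CY f g
    _ ≤ ENNReal.ofReal C₀ * (eLp p (NX f) volume * eLp p' (CY g) volume) := by
        gcongr
        exact lintegral_mul_le_eLp_mul_eLp (measurable_NX f).aemeasurable
          (measurable_CY g).aemeasurable
    _ = ENNReal.ofReal C₀ * eLp p (NX f) volume * eLp p' (CY g) volume := (mul_assoc _ _ _).symm

/-- Theorem 2.2(i): `∑_Q |⟨f_Q, g_Q⟩| ≤ C ‖N_X f‖_p ‖C_Y g‖_{p'}`, with `C` depending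
only on `p`, `n` and the uniform duality constant `C₀`. -/
theorem stmt0 (n : ℕ) (p p' : ℝ≥0∞) (hp1 : 1 ≤ p) (hptop : p ≠ ∞)
    (hconj : 1/p + 1/p' = 1) (C₀ : ℝ) (hC₀ : 0 < C₀) :
    ∃ C : ℝ, 0 < C ∧
      ∀ (X Y : DIdx n → Type)
        [∀ Q, NormedAddCommGroup (X Q)] [∀ Q, NormedSpace ℝ (X Q)]
        [∀ Q, CompleteSpace (X Q)]
        [∀ Q, NormedAddCommGroup (Y Q)] [∀ Q, NormedSpace ℝ (Y Q)]
        [∀ Q, CompleteSpace (Y Q)]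
        (pair : ∀ Q, X Q →ₗ[ℝ] Y Q →ₗ[ℝ] ℝ),
        (∀ Q, IsDuality (pair Q) C₀) →
        ∀ (f : ∀ Q, X Q) (g : ∀ Q, Y Q),
          ∑' Q, (‖pair Q (f Q) (g Q)‖₊ : ℝ≥0∞) ≤
            ENNReal.ofReal C * eLp p (NX f) volume * eLp p' (CY g) volume :=
  stmt0_general n p p' hconj C₀ hC₀

end
end

section
/- Let 1 < p' < ∞. Then the subspace of finitely non-zero sequences g = (g_Q)_{Q∈𝒟} (i.e. sequences with g_Q ≠ 0 for at most finitely many Q) is dense in the Banach space Y_{p'}. -/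
open MeasureTheory ENNReal

noncomputable section

/-!
Write `avg_Q w = |Q|⁻¹ ∑_{R ⊆ Q} w R`, so that `C_Y g = sup_{Q ∋ x} avg_Q ‖g‖`. Removing the first
`k` terms of `g` leaves tail weights that decrease to `0` and are dominated by `‖g‖`; by dominated
convergence it suffices that `C_Y` of the tails tends to `0` almost everywhere.
Since `C_Y g ≥ avg_Q ‖g‖` on `Q`, Chebyshev gives `(avg_Q ‖g‖)^p' |Q| ≤ ‖C_Y g‖_{p'}^{p'}`, so cubes
of large volume have small averages, uniformly in `k`. The other cubes through `x` lie in a single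
cube `P` of a fixed scale. Among the cubes `Q ⊆ P` with average above `η`, the coarsest ones are
pairwise disjoint and cover the others, which gives the weak type bound
`|⋃ {Q ⊆ P : avg_Q w > η}| ≤ η⁻¹ ∑_{R ⊆ P} w R`; for the tails its right side tends to `0`.
In dimension `0` every cube is the whole one-point space and `C_Y` of a tail is the tail sum.
-/

open Filter Topology

lemma tendsto_tsum_indicator_le_atTop {α : Type*} (f : α → ℕ) {w : α → ℝ≥0∞}
    (hw : ∑' a, w a ≠ ∞) : Tendsto (fun k => ∑' a, {a | f a < k}ᶜ.indicator w a) atTop (𝓝 0) := by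
  refine ENNReal.tendsto_atTop_zero.2 fun η hη => ?_
  obtain ⟨s, hs⟩ :=
    ((ENNReal.tendsto_tsum_compl_atTop_zero hw).eventually (eventually_le_nhds hη)).exists
  refine ⟨s.sup f + 1, fun k hk => le_trans ?_ hs⟩
  refine le_trans ?_ (tsum_subtype {a | a ∉ s} w).ge
  refine ENNReal.tsum_le_tsum fun a => Set.indicator_le_indicator_of_subset
    (s := {a | f a < k}ᶜ) (fun a ha has => ha ((Nat.lt_succ_of_le (Finset.le_sup has)).trans_le hk))
    (fun _ => zero_le) a

namespace DyadicCube

variable {n : ℕ}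

lemma dcube_eq_preimage (Q : DIdx n) : dcube n Q =
    (MeasurableEquiv.toLp 2 (Fin n → ℝ)).symm ⁻¹' Set.univ.pi fun i =>
      Set.Ioo ((2:ℝ) ^ (-Q.1) * Q.2 i) ((2:ℝ) ^ (-Q.1) * (Q.2 i + 1)) := by
  ext x
  simp [dcube, Set.mem_pi]

lemma measurableSet_dcube (Q : DIdx n) : MeasurableSet (dcube n Q) := by
  rw [dcube_eq_preimage]
  exact (MeasurableEquiv.toLp 2 (Fin n → ℝ)).symm.measurable
    (MeasurableSet.univ_pi fun _ => measurableSet_Ioo)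

lemma volume_dcube (Q : DIdx n) :
    volume (dcube n Q) = ENNReal.ofReal ((2:ℝ) ^ (-Q.1)) ^ n := by
  rw [dcube_eq_preimage,
    (EuclideanSpace.volume_preserving_symm_measurableEquiv_toLp (Fin n)).measure_preimage
      (MeasurableSet.univ_pi fun _ => measurableSet_Ioo).nullMeasurableSet,
    volume_pi_pi]
  simp [Real.volume_Ioo, ← mul_sub]

lemma volume_dcube_pos (Q : DIdx n) : 0 < volume (dcube n Q) := by
  rw [volume_dcube]
  exact ENNReal.pow_pos (ENNReal.ofReal_pos.2 (zpow_pos two_pos _)) n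

lemma volume_dcube_ne_top (Q : DIdx n) : volume (dcube n Q) ≠ ∞ := by
  rw [volume_dcube]
  exact ENNReal.pow_ne_top ENNReal.ofReal_ne_top

lemma nonempty_dcube (Q : DIdx n) : (dcube n Q).Nonempty := by
  refine ⟨WithLp.toLp 2 fun i => (2:ℝ) ^ (-Q.1) * (Q.2 i + 2⁻¹), fun i => ?_⟩
  constructor <;> nlinarith [zpow_pos (two_pos : (0:ℝ) < 2) (-Q.1)]

lemma dcube_zero (Q : DIdx 0) : dcube 0 Q = Set.univ :=
  Set.eq_univ_of_forall fun _ i => i.elim0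

lemma Ioo_subset_Ioo_ediv_two_pow {s : ℝ} (hs : 0 < s) (k : ℤ) (d : ℕ) :
    Set.Ioo (s * k) (s * (k + 1)) ⊆
      Set.Ioo (s * 2 ^ d * ↑(k / 2 ^ d)) (s * 2 ^ d * (↑(k / 2 ^ d) + 1)) := by
  have hd : (0:ℤ) < 2 ^ d := by positivity
  have hlo : ((2 ^ d * (k / 2 ^ d) : ℤ) : ℝ) ≤ k := by exact_mod_cast Int.mul_ediv_self_le hd.ne'
  have hhi : (k + 1 : ℝ) ≤ ((2 ^ d * (k / 2 ^ d) + 2 ^ d : ℤ) : ℝ) := by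
    exact_mod_cast Int.lt_mul_ediv_self_add (x := k) hd
  push_cast at hlo hhi
  refine Set.Ioo_subset_Ioo ?_ ?_
  · calc s * 2 ^ d * ↑(k / 2 ^ d) = s * (2 ^ d * ↑(k / 2 ^ d)) := by ring
      _ ≤ s * k := by gcongr
  · calc s * (k + 1) ≤ s * (2 ^ d * ↑(k / 2 ^ d) + 2 ^ d) := by gcongr
      _ = s * 2 ^ d * (↑(k / 2 ^ d) + 1) := by ring

lemma exists_scale_eq_dcube_subset (Q : DIdx n) {j : ℤ} (hj : j ≤ Q.1) :
    ∃ P : DIdx n, P.1 = j ∧ dcube n Q ⊆ dcube n P := by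
  set d := (Q.1 - j).toNat
  have hscale : (2:ℝ) ^ (-j) = 2 ^ (-Q.1) * 2 ^ d := by
    rw [← zpow_natCast, ← zpow_add₀ two_ne_zero]
    congr 1
    omega
  refine ⟨(j, fun i => Q.2 i / 2 ^ d), rfl, fun x hx i => ?_⟩
  rw [hscale]
  exact Ioo_subset_Ioo_ediv_two_pow (zpow_pos two_pos _) (Q.2 i) d (hx i)

lemma eq_of_scale_eq_of_mem {Q Q' : DIdx n} (hj : Q.1 = Q'.1) {x : EuclideanSpace ℝ (Fin n)}
    (hx : x ∈ dcube n Q) (hx' : x ∈ dcube n Q') : Q = Q' := by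
  have hs : (0:ℝ) < 2 ^ (-Q.1) := zpow_pos two_pos _
  refine Prod.ext hj (funext fun i => ?_)
  have h₁ := hx i
  have h₂ := hx' i
  rw [← hj] at h₂
  have a₁ : (Q.2 i : ℝ) < Q'.2 i + 1 := (mul_lt_mul_iff_right₀ hs).1 (h₁.1.trans h₂.2)
  have a₂ : (Q'.2 i : ℝ) < Q.2 i + 1 := (mul_lt_mul_iff_right₀ hs).1 (h₂.1.trans h₁.2)
  have : Q.2 i < Q'.2 i + 1 := by exact_mod_cast a₁
  have : Q'.2 i < Q.2 i + 1 := by exact_mod_cast a₂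
  omega

lemma dcube_subset_of_scale_le {Q P : DIdx n} (h : P.1 ≤ Q.1) {x : EuclideanSpace ℝ (Fin n)}
    (hxQ : x ∈ dcube n Q) (hxP : x ∈ dcube n P) : dcube n Q ⊆ dcube n P := by
  obtain ⟨P', hP', hQP'⟩ := exists_scale_eq_dcube_subset Q h
  rwa [eq_of_scale_eq_of_mem hP' (hQP' hxQ) hxP] at hQP'

lemma exists_scale_forall_lt_volume_dcube (hn : n ≠ 0) {V : ℝ≥0∞} (hV : V ≠ ∞) :
    ∃ j : ℤ, ∀ Q : DIdx n, Q.1 < j → V < volume (dcube n Q) := by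
  obtain ⟨m, hm⟩ := ENNReal.exists_nat_gt hV
  refine ⟨-m, fun Q hQ => hm.trans_le ?_⟩
  have hbase : (m : ℝ≥0∞) ≤ ENNReal.ofReal ((2:ℝ) ^ (-Q.1)) := by
    rw [← ENNReal.ofReal_natCast]
    refine ENNReal.ofReal_le_ofReal ?_
    calc (m : ℝ) ≤ 2 ^ m := by exact_mod_cast Nat.lt_two_pow_self.le
      _ = 2 ^ (m : ℤ) := (zpow_natCast 2 m).symm
      _ ≤ 2 ^ (-Q.1) := zpow_le_zpow_right₀ one_le_two (by omega)
  rw [volume_dcube]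
  calc (m : ℝ≥0∞) ≤ ENNReal.ofReal ((2:ℝ) ^ (-Q.1)) := hbase
    _ ≤ ENNReal.ofReal ((2:ℝ) ^ (-Q.1)) ^ n :=
      le_self_pow₀ (ENNReal.one_le_ofReal.2 (one_le_zpow₀ one_le_two (by omega))) hn

def subcubeSum (n : ℕ) (w : DIdx n → ℝ≥0∞) (Q : DIdx n) : ℝ≥0∞ :=
  ∑' R : {R : DIdx n // dcube n R ⊆ dcube n Q}, w R

def carlesonAvg (n : ℕ) (w : DIdx n → ℝ≥0∞) (Q : DIdx n) : ℝ≥0∞ :=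
  (volume (dcube n Q))⁻¹ * subcubeSum n w Q

def carleson (n : ℕ) (w : DIdx n → ℝ≥0∞) (x : EuclideanSpace ℝ (Fin n)) : ℝ≥0∞ :=
  ⨆ Q, ⨆ _ : x ∈ dcube n Q, carlesonAvg n w Q

lemma CY_eq_carleson {Y : DIdx n → Type*} [∀ Q, NormedAddCommGroup (Y Q)] (g : ∀ Q, Y Q) :
    CY g = carleson n fun R => ‖g R‖₊ :=
  rfl

lemma subcubeSum_mono {w w' : DIdx n → ℝ≥0∞} (h : w ≤ w') (Q : DIdx n) :
    subcubeSum n w Q ≤ subcubeSum n w' Q :=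
  ENNReal.tsum_le_tsum fun R => h R

lemma subcubeSum_mono_right (w : DIdx n → ℝ≥0∞) {Q Q' : DIdx n}
    (h : dcube n Q ⊆ dcube n Q') : subcubeSum n w Q ≤ subcubeSum n w Q' :=
  ENNReal.tsum_mono_subtype w fun _ hR => Set.Subset.trans hR h

lemma carlesonAvg_mono {w w' : DIdx n → ℝ≥0∞} (h : w ≤ w') (Q : DIdx n) :
    carlesonAvg n w Q ≤ carlesonAvg n w' Q :=
  mul_le_mul_right (subcubeSum_mono h Q) _

lemma carlesonAvg_le_carleson (w : DIdx n → ℝ≥0∞) {Q : DIdx n} {x : EuclideanSpace ℝ (Fin n)}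
    (hx : x ∈ dcube n Q) : carlesonAvg n w Q ≤ carleson n w x :=
  le_iSup₂ (f := fun Q (_ : x ∈ dcube n Q) => carlesonAvg n w Q) Q hx

lemma carleson_mono {w w' : DIdx n → ℝ≥0∞} (h : w ≤ w') : carleson n w ≤ carleson n w' :=
  fun _ => iSup₂_mono fun Q _ => carlesonAvg_mono h Q

lemma measurable_carleson (w : DIdx n → ℝ≥0∞) : Measurable (carleson n w) := by
  refine Measurable.iSup fun Q => ?_
  have : (fun x => ⨆ _ : x ∈ dcube n Q, carlesonAvg n w Q) =
      (dcube n Q).indicator fun _ => carlesonAvg n w Q := by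
    ext x
    by_cases h : x ∈ dcube n Q <;> simp [h]
  rw [this]
  exact measurable_const.indicator (measurableSet_dcube Q)

lemma carleson_dim_zero (w : DIdx 0 → ℝ≥0∞) (x : EuclideanSpace ℝ (Fin 0)) (Q : DIdx 0) :
    carleson 0 w x = carlesonAvg 0 w Q := by
  have hsum (Q' : DIdx 0) : subcubeSum 0 w Q' = subcubeSum 0 w Q :=
    le_antisymm (subcubeSum_mono_right w (by simp [dcube_zero]))
      (subcubeSum_mono_right w (by simp [dcube_zero]))
  simp [carleson, carlesonAvg, hsum, dcube_zero]

lemma carlesonAvg_rpow_mul_volume_le {p : ℝ} (hp : 0 ≤ p) (w : DIdx n → ℝ≥0∞) (Q : DIdx n) :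
    carlesonAvg n w Q ^ p * volume (dcube n Q) ≤ ∫⁻ x, carleson n w x ^ p :=
  calc carlesonAvg n w Q ^ p * volume (dcube n Q)
      = ∫⁻ _ in dcube n Q, carlesonAvg n w Q ^ p := (setLIntegral_const _ _).symm
    _ ≤ ∫⁻ x in dcube n Q, carleson n w x ^ p :=
      setLIntegral_mono' (measurableSet_dcube Q) fun _ hx =>
        ENNReal.rpow_le_rpow (carlesonAvg_le_carleson w hx) hp
    _ ≤ ∫⁻ x, carleson n w x ^ p := setLIntegral_le_lintegral _ _

lemma subcubeSum_ne_top {p : ℝ} (hp : 0 < p) {w : DIdx n → ℝ≥0∞}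
    (hw : ∫⁻ x, carleson n w x ^ p ≠ ∞) (Q : DIdx n) : subcubeSum n w Q ≠ ∞ := by
  intro htop
  have havg : carlesonAvg n w Q = ∞ := by
    rw [carlesonAvg, htop, ENNReal.mul_top (ENNReal.inv_ne_zero.2 (volume_dcube_ne_top Q))]
  have := carlesonAvg_rpow_mul_volume_le hp.le w Q
  rw [havg, ENNReal.top_rpow_of_pos hp, ENNReal.top_mul (volume_dcube_pos Q).ne',
    top_le_iff] at this
  exact hw this

lemma exists_pairwiseDisjoint_subfamily {𝒬 : Set (DIdx n)} {j : ℤ} (hj : ∀ Q ∈ 𝒬, j ≤ Q.1) :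
    ∃ 𝒬' ⊆ 𝒬, 𝒬'.PairwiseDisjoint (dcube n) ∧
      ⋃ Q ∈ 𝒬, dcube n Q ⊆ ⋃ Q ∈ 𝒬', dcube n Q := by
  refine ⟨{Q ∈ 𝒬 | ∀ Q' ∈ 𝒬, (dcube n Q ∩ dcube n Q').Nonempty → Q.1 ≤ Q'.1},
    fun Q hQ => hQ.1, ?_, ?_⟩
  · intro Q₁ hQ₁ Q₂ hQ₂ hne
    refine Set.disjoint_iff_inter_eq_empty.2 (Set.not_nonempty_iff_eq_empty.1 fun hmeet => ?_)
    obtain ⟨x, hx₁, hx₂⟩ := hmeet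
    have h₁₂ := hQ₁.2 Q₂ hQ₂.1 ⟨x, hx₁, hx₂⟩
    have h₂₁ := hQ₂.2 Q₁ hQ₁.1 ⟨x, hx₂, hx₁⟩
    exact hne (eq_of_scale_eq_of_mem (le_antisymm h₁₂ h₂₁) hx₁ hx₂)
  · simp only [Set.iUnion_subset_iff]
    intro Q hQ x hxQ
    obtain ⟨s, ⟨Q₀, hQ₀, hxQ₀, rfl⟩, hmin⟩ := Int.exists_least_of_bdd
      (P := fun s => ∃ Q' ∈ 𝒬, x ∈ dcube n Q' ∧ Q'.1 = s)
      ⟨j, fun _ ⟨Q', hQ', _, hs⟩ => hs ▸ hj Q' hQ'⟩ ⟨Q.1, Q, hQ, hxQ, rfl⟩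
    refine Set.mem_biUnion ⟨hQ₀, fun Q' hQ' ⟨y, hy₀, hy'⟩ => ?_⟩ hxQ₀
    by_contra! hlt
    exact hlt.not_ge (hmin _ ⟨Q', hQ', dcube_subset_of_scale_le hlt.le hy₀ hy' hxQ₀, rfl⟩)

lemma subcubeSum_eq_tsum_indicator (w : DIdx n → ℝ≥0∞) (Q : DIdx n) :
    subcubeSum n w Q = ∑' R, {R | dcube n R ⊆ dcube n Q}.indicator w R :=
  tsum_subtype {R | dcube n R ⊆ dcube n Q} w

lemma tsum_subcubeSum_le_of_pairwiseDisjoint (w : DIdx n → ℝ≥0∞) {𝒬 : Set (DIdx n)}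
    (hd : 𝒬.PairwiseDisjoint (dcube n)) {P : DIdx n} (hP : ∀ Q ∈ 𝒬, dcube n Q ⊆ dcube n P) :
    ∑' Q : 𝒬, subcubeSum n w Q ≤ subcubeSum n w P := by
  simp only [subcubeSum_eq_tsum_indicator]
  rw [ENNReal.tsum_comm]
  refine ENNReal.tsum_le_tsum fun R => ?_
  by_cases hR : ∃ Q₀ : 𝒬, dcube n R ⊆ dcube n Q₀
  · obtain ⟨Q₀, hRQ₀⟩ := hR
    -- `R` lies in at most one cube of the disjoint family
    rw [tsum_eq_single Q₀ fun Q hne => Set.indicator_of_notMem (fun hRQ => hne ?_) _,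
      Set.indicator_of_mem (s := {R | dcube n R ⊆ dcube n Q₀}) hRQ₀,
      Set.indicator_of_mem (s := {R | dcube n R ⊆ dcube n P}) (hRQ₀.trans (hP _ Q₀.2))]
    obtain ⟨y, hy⟩ := nonempty_dcube R
    exact Subtype.ext (hd.elim Q.2 Q₀.2 (Set.not_disjoint_iff.2 ⟨y, hRQ hy, hRQ₀ hy⟩))
  · push Not at hR
    simp only [Set.indicator_of_notMem (s := {R | dcube n R ⊆ dcube n _}) (hR _), tsum_zero]
    exact zero_le

def exceptionalCubes (w : DIdx n → ℝ≥0∞) (P : DIdx n) (η : ℝ≥0∞) : Set (DIdx n) :=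
  {Q | dcube n Q ⊆ dcube n P ∧ P.1 ≤ Q.1 ∧ η < carlesonAvg n w Q}

lemma volume_biUnion_exceptionalCubes_le (w : DIdx n → ℝ≥0∞) (P : DIdx n) {η : ℝ≥0∞}
    (hη : η ≠ 0) :
    volume (⋃ Q ∈ exceptionalCubes w P η, dcube n Q) ≤ η⁻¹ * subcubeSum n w P := by
  obtain ⟨𝒬, h𝒬, hd, hcover⟩ :=
    exists_pairwiseDisjoint_subfamily (𝒬 := exceptionalCubes w P η) fun _ hQ => hQ.2.1
  have hvol : ∀ Q ∈ exceptionalCubes w P η, volume (dcube n Q) ≤ η⁻¹ * subcubeSum n w Q := by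
    intro Q hQ
    have hlt : η * volume (dcube n Q) < subcubeSum n w Q := by
      have := hQ.2.2
      rwa [carlesonAvg, ← ENNReal.div_eq_inv_mul, ENNReal.lt_div_iff_mul_lt
        (.inl (volume_dcube_pos Q).ne') (.inl (volume_dcube_ne_top Q))] at this
    rw [← ENNReal.div_eq_inv_mul, ENNReal.le_div_iff_mul_le (.inl hη) (.inl (ne_top_of_lt hQ.2.2)),
      mul_comm]
    exact hlt.le
  calc volume (⋃ Q ∈ exceptionalCubes w P η, dcube n Q)
      ≤ volume (⋃ Q ∈ 𝒬, dcube n Q) := measure_mono hcover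
    _ ≤ ∑' Q : 𝒬, volume (dcube n Q) := measure_biUnion_le _ (Set.to_countable 𝒬) _
    _ ≤ ∑' Q : 𝒬, η⁻¹ * subcubeSum n w Q := ENNReal.tsum_le_tsum fun Q => hvol Q (h𝒬 Q.2)
    _ = η⁻¹ * ∑' Q : 𝒬, subcubeSum n w Q := ENNReal.tsum_mul_left
    _ ≤ η⁻¹ * subcubeSum n w P :=
      mul_le_mul_right (tsum_subcubeSum_le_of_pairwiseDisjoint w hd fun Q hQ => (h𝒬 hQ).1) _

lemma ae_exists_forall_carlesonAvg_le {w : ℕ → DIdx n → ℝ≥0∞}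
    (htail : ∀ P, Tendsto (fun k => subcubeSum n (w k) P) atTop (𝓝 0)) :
    ∀ᵐ x, ∀ j : ℤ, ∀ η > 0, ∃ k, ∀ Q, x ∈ dcube n Q → j ≤ Q.1 → carlesonAvg n (w k) Q ≤ η := by
  have hnull (P : DIdx n) (i : ℕ) :
      volume (⋂ k, ⋃ Q ∈ exceptionalCubes (w k) P (i : ℝ≥0∞)⁻¹, dcube n Q) = 0 := by
    have hlim : Tendsto (fun k => ((i : ℝ≥0∞)⁻¹)⁻¹ * subcubeSum n (w k) P) atTop (𝓝 0) := by
      simpa using ENNReal.Tendsto.const_mul (htail P) (.inr (by simp))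
    exact le_antisymm (ge_of_tendsto' hlim fun k => (measure_mono (Set.iInter_subset _ k)).trans
      (volume_biUnion_exceptionalCubes_le (w k) P (by simp))) zero_le
  have hgood : ∀ᵐ x, ∀ (P : DIdx n) (i : ℕ),
      x ∉ ⋂ k, ⋃ Q ∈ exceptionalCubes (w k) P (i : ℝ≥0∞)⁻¹, dcube n Q := by
    simp only [ae_all_iff]
    exact fun P i => measure_eq_zero_iff_ae_notMem.1 (hnull P i)
  filter_upwards [hgood] with x hx j η hη
  obtain ⟨i, hi⟩ := ENNReal.exists_inv_nat_lt hη.ne'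
  by_cases hcube : ∃ Q₀, x ∈ dcube n Q₀ ∧ j ≤ Q₀.1
  · obtain ⟨Q₀, hxQ₀, hjQ₀⟩ := hcube
    obtain ⟨P, rfl, hQ₀P⟩ := exists_scale_eq_dcube_subset Q₀ hjQ₀
    obtain ⟨k, hk⟩ : ∃ k, x ∉ ⋃ Q ∈ exceptionalCubes (w k) P (i : ℝ≥0∞)⁻¹, dcube n Q := by
      simpa using hx P i
    refine ⟨k, fun Q hxQ hPQ => le_trans ?_ hi.le⟩
    by_contra! hlt
    exact hk (Set.mem_biUnion ⟨dcube_subset_of_scale_le hPQ hxQ (hQ₀P hxQ₀), hPQ, hlt⟩ hxQ)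
  · push Not at hcube
    exact ⟨0, fun Q hxQ hjQ => absurd hjQ (hcube Q hxQ).not_ge⟩

lemma exists_scale_forall_carlesonAvg_le (hn : n ≠ 0) {p : ℝ} (hp : 0 < p)
    {w : DIdx n → ℝ≥0∞} (hw : ∫⁻ x, carleson n w x ^ p ≠ ∞) {η : ℝ≥0∞} (hη : 0 < η) :
    ∃ j : ℤ, ∀ Q : DIdx n, Q.1 < j → carlesonAvg n w Q ≤ η := by
  have hηp : η ^ p ≠ 0 := (ENNReal.rpow_pos_of_nonneg hη hp.le).ne'
  obtain ⟨j, hj⟩ := exists_scale_forall_lt_volume_dcube hn (ENNReal.div_ne_top hw hηp)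
  refine ⟨j, fun Q hQ => ?_⟩
  by_contra! hlt
  refine (hj Q hQ).not_ge ?_
  rw [ENNReal.le_div_iff_mul_le (.inl hηp) (.inr hw), mul_comm]
  calc η ^ p * volume (dcube n Q) ≤ carlesonAvg n w Q ^ p * volume (dcube n Q) := by
        gcongr
    _ ≤ ∫⁻ x, carleson n w x ^ p := carlesonAvg_rpow_mul_volume_le hp.le w Q

theorem ae_tendsto_carleson_zero {p : ℝ} (hp : 0 < p) {w : ℕ → DIdx n → ℝ≥0∞} (hw : Antitone w)
    (htail : ∀ P, Tendsto (fun k => subcubeSum n (w k) P) atTop (𝓝 0))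
    (hint : ∫⁻ x, carleson n (w 0) x ^ p ≠ ∞) :
    ∀ᵐ x, Tendsto (fun k => carleson n (w k) x) atTop (𝓝 0) := by
  rcases eq_or_ne n 0 with rfl | hn
  · refine Eventually.of_forall fun x => ?_
    simp only [carleson_dim_zero _ x 0]
    simpa [carlesonAvg] using ENNReal.Tendsto.const_mul (htail 0)
      (.inr (ENNReal.inv_ne_top.2 (volume_dcube_pos 0).ne'))
  filter_upwards [ae_exists_forall_carlesonAvg_le htail] with x hx
  refine ENNReal.tendsto_atTop_zero.2 fun η hη => ?_
  obtain ⟨j, hj⟩ := exists_scale_forall_carlesonAvg_le hn hp hint hη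
  obtain ⟨k, hk⟩ := hx j η hη
  refine ⟨k, fun k' hk' => iSup₂_le fun Q hxQ => ?_⟩
  rcases le_or_gt j Q.1 with hjQ | hQj
  · exact (carlesonAvg_mono (hw hk') Q).trans (hk Q hxQ hjQ)
  · exact (carlesonAvg_mono (hw (Nat.zero_le k')) Q).trans (hj Q hQj)

theorem tendsto_lintegral_carleson_rpow {p : ℝ} (hp : 0 < p) {w : ℕ → DIdx n → ℝ≥0∞}
    (hw : Antitone w) (htail : ∀ P, Tendsto (fun k => subcubeSum n (w k) P) atTop (𝓝 0))
    (hint : ∫⁻ x, carleson n (w 0) x ^ p ≠ ∞) :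
    Tendsto (fun k => ∫⁻ x, carleson n (w k) x ^ p) atTop (𝓝 0) := by
  have := tendsto_lintegral_of_dominated_convergence (fun x => carleson n (w 0) x ^ p)
    (fun k => (measurable_carleson (w k)).pow_const p)
    (fun k => Eventually.of_forall fun x =>
      ENNReal.rpow_le_rpow (carleson_mono (hw (Nat.zero_le k)) x) hp.le)
    hint ((ae_tendsto_carleson_zero hp hw htail hint).mono fun x hx => hx.ennrpow_const p)
  simpa [ENNReal.zero_rpow_of_pos hp] using this

lemma tendsto_subcubeSum_indicator_le_atTop (f : DIdx n → ℕ) {w : DIdx n → ℝ≥0∞} {P : DIdx n}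
    (hw : subcubeSum n w P ≠ ∞) :
    Tendsto (fun k => subcubeSum n ({R | f R < k}ᶜ.indicator w) P) atTop (𝓝 0) :=
  tendsto_tsum_indicator_le_atTop (fun R : {R // dcube n R ⊆ dcube n P} => f R) hw

lemma CY_sub_truncation {Y : DIdx n → Type*} [∀ Q, NormedAddCommGroup (Y Q)] (g : ∀ Q, Y Q)
    (f : DIdx n → ℕ) (k : ℕ) :
    CY (fun Q => g Q - if f Q < k then g Q else 0) =
      carleson n ({R | f R < k}ᶜ.indicator fun R => ‖g R‖₊) := by
  rw [CY_eq_carleson]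
  congr 1
  funext R
  by_cases hR : f R < k <;> simp [hR]

end DyadicCube

open DyadicCube Filter Topology in
theorem stmt9_general (n : ℕ) (p' : ℝ≥0∞) (hp1 : 1 < p') (hptop : p' ≠ ∞)
    (Y : DIdx n → Type)
    [∀ Q, NormedAddCommGroup (Y Q)]
    (g : ∀ Q, Y Q) (hg : eLp p' (CY g) volume ≠ ∞)
    (ε : ℝ≥0∞) (hε : 0 < ε) :
    ∃ g' : ∀ Q, Y Q, {Q | g' Q ≠ 0}.Finite ∧
      eLp p' (CY (fun Q => g Q - g' Q)) volume < ε := by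
  have hp : 0 < p'.toReal := ENNReal.toReal_pos (zero_lt_one.trans hp1).ne' hptop
  have heLp (F : EuclideanSpace ℝ (Fin n) → ℝ≥0∞) :
      eLp p' F volume = (∫⁻ x, F x ^ p'.toReal) ^ p'.toReal⁻¹ := if_neg hptop
  have hint : ∫⁻ x, carleson n (fun R => ‖g R‖₊) x ^ p'.toReal ≠ ∞ := fun htop => hg <| by
    rw [heLp, CY_eq_carleson, htop, ENNReal.top_rpow_of_pos (inv_pos.2 hp)]
  obtain ⟨enc, henc⟩ := Countable.exists_injective_nat (DIdx n)
  have hlim := tendsto_lintegral_carleson_rpow hp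
    (w := fun k => {R | enc R < k}ᶜ.indicator fun R => ‖g R‖₊)
    (fun k k' hk => Set.indicator_le_indicator_of_subset
      (Set.compl_subset_compl.2 fun _ hR => hR.trans_le hk) fun _ => zero_le)
    (fun P => tendsto_subcubeSum_indicator_le_atTop enc (subcubeSum_ne_top hp hint P))
    (by simpa using hint)
  obtain ⟨k, hk⟩ := ((hlim.ennrpow_const p'.toReal⁻¹).eventually
    (gt_mem_nhds (by rwa [ENNReal.zero_rpow_of_pos (inv_pos.2 hp)]))).exists
  refine ⟨fun Q => if enc Q < k then g Q else 0,
    ((Set.finite_Iio k).preimage henc.injOn).subset fun Q hQ => ?_, ?_⟩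
  · by_contra hkQ
    exact hQ (if_neg hkQ)
  · rwa [CY_sub_truncation, heLp]

/-- Lemma 2.5: for `1 < p' < ∞`, the finitely non-zero sequences are dense in `Y_{p'}`. -/
theorem stmt9 (n : ℕ) (p' : ℝ≥0∞) (hp1 : 1 < p') (hptop : p' ≠ ∞)
    (Y : DIdx n → Type)
    [∀ Q, NormedAddCommGroup (Y Q)] [∀ Q, NormedSpace ℝ (Y Q)] [∀ Q, CompleteSpace (Y Q)]
    (g : ∀ Q, Y Q) (hg : eLp p' (CY g) volume ≠ ∞)
    (ε : ℝ≥0∞) (hε : 0 < ε) :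
    ∃ g' : ∀ Q, Y Q, {Q | g' Q ≠ 0}.Finite ∧
      eLp p' (CY (fun Q => g Q - g' Q)) volume < ε :=
  stmt9_general n p' hp1 hptop Y g hg ε hε
end
end

section
/- Consider two functions f, g : ℝ^n → [0, ∞). Assume there are constants 0 < c_1, c_2 < ∞ such that for every z ∈ ℝ^n and λ > 0 with f(z) > λ, there exists a measurable set B ⊂ ℝ^n with g(y) > c_1 λ for all y ∈ B and 0 < (sup_{y∈B} |y − z|)^n ≤ c_2 |B|. Then there is a constant 0 < c_3 < ∞, depending only on c_1, c_2 and n, such that ‖f‖_{L_p(ℝ^n)} ≤ c_3 ‖g‖_{L_p(ℝ^n)} for every 1 ≤ p ≤ ∞. -/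
/-!
For `λ > 0`, each point `z` of `{f > λ}` comes with a set `B ⊆ {g > c₁ λ}` contained in the closed
ball of radius `r = sup_{y ∈ B} |y - z|` about `z`, and `|B(z, 5r)| = 5ⁿ |B(0,1)| rⁿ ≤ K |B|` with
`K = 5ⁿ |B(0,1)| c₂`. Vitali's covering lemma selects countably many disjoint such balls whose
fivefold enlargements cover `{f > λ}`, hence `|{f > λ}| ≤ K |U|` for a measurable
`U ⊆ {g > c₁ λ}`. The layer-cake formula turns this into `‖f‖_p ≤ K^{1/p} c₁⁻¹ ‖g‖_p`, and for
`p = ∞` it bounds the essential supremum directly. As `f` and `g` need not be measurable, `g` is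
replaced by the measurable minorant `sup_q q 𝟙_{U_q}` (over positive rationals `q`) and `f` by a
measurable minorant with the same integral of `f ^ p`.
-/

open MeasureTheory ENNReal Set Metric Module

namespace MeasureTheory

section Covering

variable {X : Type*} [PseudoMetricSpace X] [MeasurableSpace X] [OpensMeasurableSpace X]
  (μ : Measure X) [SFinite μ] {s : Set X} {B : X → Set X} {ρ : X → ℝ} {K : ℝ≥0∞}

theorem exists_measurableSet_subset_biUnion_measure_le_of_bddAbove
    (hBm : ∀ z ∈ s, MeasurableSet (B z)) (hBρ : ∀ z ∈ s, B z ⊆ closedBall z (ρ z))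
    (hpos : ∀ z ∈ s, 0 < μ (closedBall z (ρ z)))
    (hK : ∀ z ∈ s, μ (closedBall z (5 * ρ z)) ≤ K * μ (B z)) (hρ : BddAbove (ρ '' s)) :
    ∃ U ⊆ ⋃ z ∈ s, B z, MeasurableSet U ∧ μ s ≤ K * μ U := by
  obtain ⟨R, hR⟩ := hρ
  obtain ⟨u, hus, hud, hcov⟩ :=
    Vitali.exists_disjoint_subfamily_covering_enlargement_closedBall s id ρ R
      (fun z hz ↦ hR (mem_image_of_mem ρ hz)) 5 (by norm_num)
  have hu : u.Countable := by
    have := Measure.countable_meas_pos_of_disjoint_iUnion (μ := μ)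
      (As := fun z : u ↦ closedBall (z : X) (ρ z)) (fun _ ↦ measurableSet_closedBall)
      fun z z' hzz' ↦ hud z.2 z'.2 (Subtype.coe_injective.ne hzz')
    have hall : {z : u | 0 < μ (closedBall (z : X) (ρ z))} = univ :=
      eq_univ_of_forall fun z ↦ hpos z (hus z.2)
    rw [hall, countable_univ_iff] at this
    exact countable_coe_iff.1 this
  have hρ0 : ∀ z ∈ s, 0 ≤ ρ z := fun z hz ↦ not_lt.1 fun h ↦
    (hpos z hz).ne' (by rw [closedBall_eq_empty.2 h, measure_empty])
  have hs : s ⊆ ⋃ z ∈ u, closedBall z (5 * ρ z) := fun z hz ↦ by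
    obtain ⟨z', hz', hsub⟩ := hcov z hz
    exact mem_biUnion hz' (hsub (mem_closedBall_self (hρ0 z hz)))
  have hBd : u.PairwiseDisjoint B := fun z hz z' hz' hzz' ↦
    (hud hz hz' hzz').mono (hBρ z (hus hz)) (hBρ z' (hus hz'))
  refine ⟨⋃ z ∈ u, B z, biUnion_subset_biUnion_left hus,
    .biUnion hu fun z hz ↦ hBm z (hus hz), ?_⟩
  calc μ s ≤ ∑' z : u, μ (closedBall (z : X) (5 * ρ z)) :=
        (measure_mono hs).trans (measure_biUnion_le μ hu _)
    _ ≤ ∑' z : u, K * μ (B z) := ENNReal.tsum_le_tsum fun z ↦ hK z (hus z.2)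
    _ = K * μ (⋃ z ∈ u, B z) := by
      rw [ENNReal.tsum_mul_left, measure_biUnion hu hBd fun z hz ↦ hBm z (hus hz)]

theorem exists_measurableSet_subset_biUnion_measure_le
    (hBm : ∀ z ∈ s, MeasurableSet (B z)) (hBρ : ∀ z ∈ s, B z ⊆ closedBall z (ρ z))
    (hpos : ∀ z ∈ s, 0 < μ (closedBall z (ρ z)))
    (hK : ∀ z ∈ s, μ (closedBall z (5 * ρ z)) ≤ K * μ (B z)) :
    ∃ U ⊆ ⋃ z ∈ s, B z, MeasurableSet U ∧ μ s ≤ K * μ U := by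
  have (N : ℕ) := exists_measurableSet_subset_biUnion_measure_le_of_bddAbove μ
    (s := {z ∈ s | ρ z ≤ N}) (fun z hz ↦ hBm z hz.1) (fun z hz ↦ hBρ z hz.1)
    (fun z hz ↦ hpos z hz.1) (fun z hz ↦ hK z hz.1) ⟨N, forall_mem_image.2 fun z hz ↦ hz.2⟩
  choose U hUB hUm hU using this
  refine ⟨⋃ N, U N, iUnion_subset fun N ↦ (hUB N).trans (biUnion_mono (sep_subset _ _)
    fun _ _ ↦ subset_rfl), .iUnion hUm, ?_⟩
  have hs : s = ⋃ N : ℕ, {z ∈ s | ρ z ≤ N} := by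
    ext z
    simp only [mem_iUnion, mem_sep_iff, exists_and_left, iff_self_and]
    exact fun _ ↦ exists_nat_ge _
  have hmono : Monotone fun N : ℕ ↦ {z ∈ s | ρ z ≤ N} := fun N N' hN z hz ↦
    ⟨hz.1, hz.2.trans (Nat.cast_le.2 hN)⟩
  calc μ s = ⨆ N : ℕ, μ {z ∈ s | ρ z ≤ N} := by rw [← hmono.measure_iUnion, ← hs]
    _ ≤ ⨆ N, K * μ (U N) := iSup_mono hU
    _ ≤ K * μ (⋃ N, U N) := iSup_le fun N ↦ by gcongr; exact subset_iUnion U N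

end Covering

section AddHaar

variable {E : Type*} [NormedAddCommGroup E] [NormedSpace ℝ E] [FiniteDimensional ℝ E]
  [MeasurableSpace E] [BorelSpace E] (μ : Measure E) [μ.IsAddHaarMeasure]

theorem exists_measurableSet_subset_biUnion_addHaar_le {s : Set E} {B : E → Set E} {C : ℝ≥0∞}
    (hC : C ≠ ∞) (hBm : ∀ z ∈ s, MeasurableSet (B z))
    (hpos : ∀ z ∈ s, 0 < (⨆ y : B z, edist (y : E) z) ^ finrank ℝ E)
    (hle : ∀ z ∈ s, (⨆ y : B z, edist (y : E) z) ^ finrank ℝ E ≤ C * μ (B z)) :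
    ∃ U ⊆ ⋃ z ∈ s, B z, MeasurableSet U ∧ μ s ≤ 5 ^ finrank ℝ E * μ (ball 0 1) * C * μ U := by
  set d := finrank ℝ E
  set r : E → ℝ≥0∞ := fun z ↦ ⨆ y : B z, edist (y : E) z
  by_cases hinf : ∃ z ∈ s, μ (B z) = ∞
  · obtain ⟨z, hz, hBz⟩ := hinf
    have hC0 : C ≠ 0 := left_ne_zero_of_mul ((hpos z hz).trans_le (hle z hz)).ne'
    refine ⟨B z, subset_biUnion_of_mem hz, hBm z hz, ?_⟩
    rw [hBz, mul_top (mul_ne_zero (mul_ne_zero (pow_ne_zero _ (by norm_num))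
      (measure_ball_pos μ _ one_pos).ne') hC0)]
    exact le_top
  push Not at hinf
  have hr : ∀ z ∈ s, r z ≠ ∞ := by
    intro z hz
    rcases eq_or_ne d 0 with hd | hd
    · have : Subsingleton E := finrank_zero_iff.1 hd
      simp [r, Subsingleton.elim _ z]
    · intro h
      have h' := hle z hz
      rw [show (⨆ y : B z, edist (y : E) z) = ∞ from h, top_pow hd] at h'
      exact mul_ne_top hC (hinf z hz) (top_le_iff.1 h')
  have hball : ∀ z ∈ s, ∀ c : ℝ, 0 ≤ c →
      μ (closedBall z (c * (r z).toReal)) = ENNReal.ofReal c ^ d * r z ^ d * μ (ball 0 1) := by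
    intro z hz c hc
    rw [Measure.addHaar_closedBall μ z (by positivity), mul_pow, ofReal_mul (by positivity),
      ofReal_pow hc, ofReal_pow toReal_nonneg, ofReal_toReal (hr z hz)]
  refine exists_measurableSet_subset_biUnion_measure_le μ (ρ := fun z ↦ (r z).toReal) hBm
    (fun z hz y hy ↦ ?_) (fun z hz ↦ ?_) fun z hz ↦ ?_
  · rw [mem_closedBall, dist_edist]
    exact toReal_mono (hr z hz) (le_iSup (fun y : B z ↦ edist (y : E) z) ⟨y, hy⟩)
  · rw [← one_mul (r z).toReal, hball z hz 1 zero_le_one]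
    simpa using mul_pos (hpos z hz).ne' (measure_ball_pos μ _ one_pos).ne'
  · rw [hball z hz 5 (by norm_num), ofReal_ofNat, mul_right_comm, mul_assoc _ C]
    gcongr
    exact hle z hz

end AddHaar

section LayerCake

variable {α : Type*} [MeasurableSpace α] (μ : Measure α)

theorem exists_measurable_le_lintegral_ofReal_rpow_eq {F : α → ℝ} (hF : 0 ≤ F) {p : ℝ}
    (hp : 0 < p) :
    ∃ F' : α → ℝ, Measurable F' ∧ 0 ≤ F' ∧ F' ≤ F ∧
      ∫⁻ x, ENNReal.ofReal (F' x ^ p) ∂μ = ∫⁻ x, ENNReal.ofReal (F x ^ p) ∂μ := by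
  obtain ⟨φ, hφm, hφF, hφ⟩ := exists_measurable_le_lintegral_eq μ fun x ↦ ENNReal.ofReal (F x ^ p)
  refine ⟨fun x ↦ (φ x).toReal ^ p⁻¹, hφm.ennreal_toReal.pow_const _, fun x ↦ by positivity,
    fun x ↦ ?_, ?_⟩
  · have hφF' : (φ x).toReal ≤ F x ^ p := toReal_le_of_le_ofReal (Real.rpow_nonneg (hF x) p) (hφF x)
    calc (φ x).toReal ^ p⁻¹ ≤ (F x ^ p) ^ p⁻¹ := by gcongr
      _ = F x := Real.rpow_rpow_inv (hF x) hp.ne'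
  · rw [hφ]
    congr with x
    rw [Real.rpow_inv_rpow toReal_nonneg hp.ne',
      ofReal_toReal ((hφF x).trans_lt ofReal_lt_top).ne]

theorem lintegral_ofReal_rpow_le_of_meas_lt_le {F H : α → ℝ} (hF : 0 ≤ F) (hH : 0 ≤ H)
    (hHm : AEMeasurable H μ) {K : ℝ≥0∞} (hK : K ≠ ∞) {p : ℝ} (hp : 0 < p)
    (hFH : ∀ t > 0, μ {x | t < F x} ≤ K * μ {x | t < H x}) :
    ∫⁻ x, ENNReal.ofReal (F x ^ p) ∂μ ≤ K * ∫⁻ x, ENNReal.ofReal (H x ^ p) ∂μ := by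
  obtain ⟨F', hF'm, hF'0, hF'F, hF'⟩ := exists_measurable_le_lintegral_ofReal_rpow_eq μ hF hp
  rw [← hF', lintegral_rpow_eq_lintegral_meas_lt_mul μ (.of_forall hF'0) hF'm.aemeasurable hp,
    lintegral_rpow_eq_lintegral_meas_lt_mul μ (.of_forall hH) hHm hp, mul_left_comm,
    ← lintegral_const_mul' K _ hK]
  gcongr ENNReal.ofReal p * ?_
  refine setLIntegral_mono' measurableSet_Ioi fun t ht ↦ ?_
  rw [← mul_assoc]
  gcongr
  exact (measure_mono fun x hx ↦ hx.trans_le (hF'F x)).trans (hFH t ht)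

theorem eLpNorm_eq_lintegral_ofReal_rpow {F : α → ℝ} (hF : 0 ≤ F) {p : ℝ≥0∞} (hp0 : p ≠ 0)
    (hp : p ≠ ∞) :
    eLpNorm F p μ = (∫⁻ x, ENNReal.ofReal (F x ^ p.toReal) ∂μ) ^ (1 / p.toReal) := by
  rw [eLpNorm_eq_lintegral_rpow_enorm_toReal hp0 hp]
  congr with x
  rw [Real.enorm_of_nonneg (hF x), ofReal_rpow_of_nonneg (hF x) toReal_nonneg]

theorem eLpNorm_le_rpow_mul_of_meas_lt_le {F H : α → ℝ} (hF : 0 ≤ F) (hH : 0 ≤ H)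
    (hHm : AEMeasurable H μ) {K : ℝ≥0∞} (hK : K ≠ ∞)
    (hFH : ∀ t > 0, μ {x | t < F x} ≤ K * μ {x | t < H x}) {p : ℝ≥0∞} (hp0 : p ≠ 0)
    (hp : p ≠ ∞) :
    eLpNorm F p μ ≤ K ^ (1 / p.toReal) * eLpNorm H p μ := by
  have hp' : 0 < p.toReal := toReal_pos hp0 hp
  rw [eLpNorm_eq_lintegral_ofReal_rpow μ hF hp0 hp, eLpNorm_eq_lintegral_ofReal_rpow μ hH hp0 hp,
    ← mul_rpow_of_nonneg _ _ (by positivity)]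
  gcongr
  exact lintegral_ofReal_rpow_le_of_meas_lt_le μ hF hH hHm hK hp' hFH

theorem eLpNormEssSup_le_of_meas_lt_le {F H : α → ℝ} (hF : 0 ≤ F) {K : ℝ≥0∞}
    (hFH : ∀ t > 0, μ {x | t < F x} ≤ K * μ {x | t < H x}) :
    eLpNormEssSup F μ ≤ eLpNormEssSup H μ := by
  refine le_of_forall_pos_le_add fun ε hε hM ↦ ?_
  set t := (eLpNormEssSup H μ).toReal + ε with ht_def
  have ht : 0 < t := by positivity
  have hHt : μ {x | t < H x} = 0 := by
    refine measure_mono_null (fun x (hx : t < H x) ↦ ?_) (meas_eLpNormEssSup_lt (f := H))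
    have hHx : t < |H x| := hx.trans_le (le_abs_self _)
    rw [mem_ofPred_eq, ← ofReal_toReal hM.ne, Real.enorm_eq_ofReal_abs]
    exact (ofReal_lt_ofReal_iff (ht.trans hHx)).2 (by linarith)
  have hFt : ∀ᵐ x ∂μ, ‖F x‖ ≤ t := by
    have hFt0 : μ {x | t < F x} = 0 := nonpos_iff_eq_zero.1 (by simpa [hHt] using hFH t ht)
    refine measure_mono_null (fun x (hx : ¬ ‖F x‖ ≤ t) ↦ ?_) hFt0
    rw [Real.norm_of_nonneg (hF x)] at hx
    exact not_le.1 hx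
  calc eLpNormEssSup F μ ≤ ENNReal.ofReal t := eLpNormEssSup_le_of_ae_bound hFt
    _ = eLpNormEssSup H μ + ε := by
      rw [ht_def, ofReal_add toReal_nonneg ε.coe_nonneg, ofReal_toReal hM.ne, ofReal_coe_nnreal]

theorem eLpNorm_le_max_mul_of_meas_lt_le {F H : α → ℝ} (hF : 0 ≤ F) (hH : 0 ≤ H)
    (hHm : AEMeasurable H μ) {K : ℝ≥0∞} (hK : K ≠ ∞)
    (hFH : ∀ t > 0, μ {x | t < F x} ≤ K * μ {x | t < H x}) {p : ℝ≥0∞} (hp : 1 ≤ p) :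
    eLpNorm F p μ ≤ max K 1 * eLpNorm H p μ := by
  rcases eq_or_ne p ∞ with rfl | hp_top
  · simp only [eLpNorm_exponent_top]
    exact (eLpNormEssSup_le_of_meas_lt_le μ hF hFH).trans
      (le_mul_of_one_le_left zero_le (le_max_right K 1))
  have hp0 : p ≠ 0 := (one_pos.trans_le hp).ne'
  have hp_inv : 1 / p.toReal ≤ 1 := by
    rw [div_le_one (toReal_pos hp0 hp_top)]
    simpa using toReal_mono hp_top hp
  calc eLpNorm F p μ ≤ K ^ (1 / p.toReal) * eLpNorm H p μ :=
        eLpNorm_le_rpow_mul_of_meas_lt_le μ hF hH hHm hK hFH hp0 hp_top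
    _ ≤ max K 1 ^ (1 / p.toReal) * eLpNorm H p μ := by gcongr; exact le_max_left K 1
    _ ≤ max K 1 ^ (1 : ℝ) * eLpNorm H p μ := by gcongr; exact le_max_right K 1
    _ = max K 1 * eLpNorm H p μ := by rw [rpow_one]

theorem exists_measurable_le_forall_meas_lt_le {f g : α → ℝ} (hg : 0 ≤ g) {K : ℝ≥0∞}
    (hfg : ∀ t > 0, ∃ U, MeasurableSet U ∧ (∀ y ∈ U, t < g y) ∧ μ {x | t < f x} ≤ K * μ U) :
    ∃ h : α → ℝ, Measurable h ∧ 0 ≤ h ∧ h ≤ g ∧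
      ∀ t > 0, μ {x | t < f x} ≤ K * μ {x | t < h x} := by
  choose! U hUm hUg hfU using hfg
  let Q := {q : ℚ // 0 < q}
  let term : Q → α → ℝ := fun q ↦ (U q).indicator fun _ ↦ (q : ℝ)
  have hterm_g : ∀ q x, term q x ≤ g x := by
    intro q x
    by_cases hx : x ∈ U q
    · simpa [term, hx] using (hUg q (Rat.cast_pos.2 q.2) x hx).le
    · simpa [term, hx] using hg x
  have hbdd : ∀ x, BddAbove (range fun q ↦ term q x) :=
    fun x ↦ ⟨g x, forall_mem_range.2 fun q ↦ hterm_g q x⟩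
  have hU_le : ∀ (q : Q), ∀ x ∈ U q, (q : ℝ) ≤ ⨆ q, term q x := fun q x hx ↦
    le_ciSup_of_le (hbdd x) q (by simp [term, hx])
  refine ⟨fun x ↦ ⨆ q, term q x,
    .iSup fun q ↦ measurable_const.indicator (hUm q (Rat.cast_pos.2 q.2)),
    fun x ↦ le_ciSup_of_le (hbdd x) ⟨1, one_pos⟩ (indicator_nonneg (by simp) x),
    fun x ↦ ciSup_le fun q ↦ hterm_g q x, fun t ht ↦ ?_⟩
  have hunion : {x | t < f x} = ⋃ q : {q : ℚ // t < q}, {x | (q : ℝ) < f x} := by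
    ext x
    simp only [mem_ofPred_eq, mem_iUnion]
    refine ⟨fun hx ↦ ?_, fun ⟨q, hq⟩ ↦ q.2.trans hq⟩
    obtain ⟨q, htq, hqf⟩ := exists_rat_btwn hx
    exact ⟨⟨q, htq⟩, hqf⟩
  have hdir : Directed (· ⊆ ·) fun q : {q : ℚ // t < q} ↦ {x | (q : ℝ) < f x} :=
    Antitone.directed_le fun q q' hqq' x (hx : (q' : ℝ) < f x) ↦
      (Rat.cast_le.2 (Subtype.coe_le_coe.2 hqq')).trans_lt hx
  rw [hunion, hdir.measure_iUnion]
  refine iSup_le fun q ↦ ?_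
  have hq : 0 < (q : ℝ) := ht.trans q.2
  refine (hfU q hq).trans (mul_le_mul_right (measure_mono fun x hx ↦ ?_) K)
  exact q.2.trans_le (hU_le ⟨q, Rat.cast_pos.1 hq⟩ x hx)

theorem eLpNorm_le_max_mul_of_forall_exists_measurableSet {f g : α → ℝ} (hf : 0 ≤ f)
    (hg : 0 ≤ g) {K : ℝ≥0∞} (hK : K ≠ ∞)
    (hfg : ∀ t > 0, ∃ U, MeasurableSet U ∧ (∀ y ∈ U, t < g y) ∧ μ {x | t < f x} ≤ K * μ U)
    {p : ℝ≥0∞} (hp : 1 ≤ p) :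
    eLpNorm f p μ ≤ max K 1 * eLpNorm g p μ := by
  obtain ⟨h, hhm, hh0, hhg, hfh⟩ := exists_measurable_le_forall_meas_lt_le μ hg hfg
  calc eLpNorm f p μ ≤ max K 1 * eLpNorm h p μ :=
        eLpNorm_le_max_mul_of_meas_lt_le μ hf hh0 hhm.aemeasurable hK hfh hp
    _ ≤ max K 1 * eLpNorm g p μ := by
      gcongr
      exact eLpNorm_mono_real fun x ↦ by rw [Real.norm_of_nonneg (hh0 x)]; exact hhg x

end LayerCake

end MeasureTheory

theorem stmt11_general (n : ℕ) (c₁ c₂ : ℝ) (hc₁ : 0 < c₁) :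
    ∃ c₃ : ℝ, 0 < c₃ ∧
      ∀ f g : EuclideanSpace ℝ (Fin n) → ℝ,
        (∀ x, 0 ≤ f x) → (∀ x, 0 ≤ g x) →
        (∀ (z : EuclideanSpace ℝ (Fin n)) (lam : ℝ), 0 < lam → lam < f z →
          ∃ B : Set (EuclideanSpace ℝ (Fin n)), MeasurableSet B ∧
            (∀ y ∈ B, c₁ * lam < g y) ∧
            0 < (⨆ y : B, edist (y : EuclideanSpace ℝ (Fin n)) z) ^ n ∧
            (⨆ y : B, edist (y : EuclideanSpace ℝ (Fin n)) z) ^ n ≤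
              ENNReal.ofReal c₂ * volume B) →
        ∀ p : ℝ≥0∞, 1 ≤ p →
          eLpNorm f p volume ≤ ENNReal.ofReal c₃ * eLpNorm g p volume := by
  set K : ℝ≥0∞ := 5 ^ n * volume (ball (0 : EuclideanSpace ℝ (Fin n)) 1) * ENNReal.ofReal c₂
  have hK : K ≠ ∞ := mul_ne_top (mul_ne_top (pow_ne_top (by norm_num)) measure_ball_lt_top.ne)
    ofReal_ne_top
  have hK1 : max K 1 ≠ ∞ := max_ne_top hK one_ne_top
  refine ⟨(max K 1).toReal / c₁,
    div_pos (toReal_pos (one_pos.trans_le (le_max_right K 1)).ne' hK1) hc₁,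
    fun f g hf hg H p hp ↦ ?_⟩
  have hfg : ∀ t > 0, ∃ U, MeasurableSet U ∧ (∀ y ∈ U, t < (c₁⁻¹ • g) y) ∧
      volume {x | t < f x} ≤ K * volume U := by
    intro t ht
    choose! B hBm hBg hpos hle using fun z (hz : t < f z) ↦ H z t ht hz
    obtain ⟨U, hUB, hUm, hU⟩ := exists_measurableSet_subset_biUnion_addHaar_le volume
      ofReal_ne_top hBm (by rwa [finrank_euclideanSpace_fin]) (by rwa [finrank_euclideanSpace_fin])
    refine ⟨U, hUm, fun y hy ↦ ?_, by rwa [finrank_euclideanSpace_fin] at hU⟩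
    obtain ⟨z, hz, hyz⟩ := mem_iUnion₂.1 (hUB hy)
    rw [Pi.smul_apply, smul_eq_mul, lt_inv_mul_iff₀ hc₁]
    exact hBg z hz y hyz
  calc eLpNorm f p volume ≤ max K 1 * eLpNorm (c₁⁻¹ • g) p volume :=
        eLpNorm_le_max_mul_of_forall_exists_measurableSet volume hf
          (fun x ↦ mul_nonneg (inv_nonneg.2 hc₁.le) (hg x)) hK hfg hp
    _ = ENNReal.ofReal ((max K 1).toReal / c₁) * eLpNorm g p volume := by
      rw [eLpNorm_const_smul, Real.enorm_of_nonneg (inv_nonneg.2 hc₁.le), ← mul_assoc,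
        div_eq_mul_inv, ofReal_mul toReal_nonneg, ofReal_toReal hK1]

/-- Lemma 3.2: if `f(z) > λ` implies `g > c₁ λ` on a set `B` with
`0 < (sup_{y ∈ B} |y - z|)ⁿ ≤ c₂ |B|`, then `‖f‖_{L_p} ≤ c₃ ‖g‖_{L_p}` for all `1 ≤ p ≤ ∞`,
with `c₃` depending only on `c₁`, `c₂` and `n`. -/
theorem stmt11 (n : ℕ) (c₁ c₂ : ℝ) (hc₁ : 0 < c₁) (hc₂ : 0 < c₂) :
    ∃ c₃ : ℝ, 0 < c₃ ∧
      ∀ f g : EuclideanSpace ℝ (Fin n) → ℝ,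
        (∀ x, 0 ≤ f x) → (∀ x, 0 ≤ g x) →
        (∀ (z : EuclideanSpace ℝ (Fin n)) (lam : ℝ), 0 < lam → lam < f z →
          ∃ B : Set (EuclideanSpace ℝ (Fin n)), MeasurableSet B ∧
            (∀ y ∈ B, c₁ * lam < g y) ∧
            0 < (⨆ y : B, edist (y : EuclideanSpace ℝ (Fin n)) z) ^ n ∧
            (⨆ y : B, edist (y : EuclideanSpace ℝ (Fin n)) z) ^ n ≤
              ENNReal.ofReal c₂ * volume B) →
        ∀ p : ℝ≥0∞, 1 ≤ p →
          eLpNorm f p volume ≤ ENNReal.ofReal c₃ * eLpNorm g p volume :=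
  stmt11_general n c₁ c₂ hc₁
end
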